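/- arXiv:1606.01154 — 5 statements merged into one kernel-verified Lean document; each statement's English description precedes it below -/
import Mathlib

section
/- For every real number η with 1/3 < η ≤ 1 one has (η − 1/3)² + 8/9 ≥ 2(1+√3)·η(η − 1/3)/(√(1 + (9/2)(η − 1/3)²) + 1). Indeed, the difference of the two sides is at least (1−η)·(1 + η − 4η/(1+√3)) ≥ 0. -/
/-- Nonnegativity of the quantity II in Case 1 of the proof of Lemma 3.1. -/
theorem stmt_9 (η : ℝ) (h1 : 1 / 3 < η) (h2 : η ≤ 1) :
    (η - 1 / 3) ^ 2 + 8 / 9 ≥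
      2 * (1 + Real.sqrt 3) * η * (η - 1 / 3) /
        (Real.sqrt (1 + (9 / 2) * (η - 1 / 3) ^ 2) + 1) ∧
    (η - 1 / 3) ^ 2 + 8 / 9 -
      2 * (1 + Real.sqrt 3) * η * (η - 1 / 3) /
        (Real.sqrt (1 + (9 / 2) * (η - 1 / 3) ^ 2) + 1) ≥
      (1 - η) * (1 + η - 4 * η / (1 + Real.sqrt 3)) ∧
    (1 - η) * (1 + η - 4 * η / (1 + Real.sqrt 3)) ≥ 0 := by
  set r : ℝ := Real.sqrt 3 with hrdef
  have hr2 : r ^ 2 = 3 := Real.sq_sqrt (by norm_num)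
  have hr_gt : 1 < r := by
    nlinarith [Real.sqrt_nonneg 3, hr2]
  have hr_lt : r < 2 := by
    nlinarith [Real.sqrt_nonneg 3, hr2]
  have hηpos : 0 < η := by linarith
  set s : ℝ := Real.sqrt (1 + (9 / 2) * (η - 1 / 3) ^ 2) with hsdef
  have hs2 : s ^ 2 = 1 + (9 / 2) * (η - 1 / 3) ^ 2 :=
    Real.sq_sqrt (by positivity)
  have hs_nonneg : 0 ≤ s := Real.sqrt_nonneg _
  have hs_ge : r * η ≤ s := by
    have h3 : 3 * η ^ 2 ≤ 1 + (9 / 2) * (η - 1 / 3) ^ 2 := by nlinarith [sq_nonneg (η - 2/3)]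
    have h4 := Real.sqrt_le_sqrt h3
    rw [← hsdef] at h4
    have heq : Real.sqrt (3 * η ^ 2) = r * η := by
      rw [Real.sqrt_mul (by norm_num), Real.sqrt_sq hηpos.le]
    linarith [heq ▸ h4]
  have hdiv : 4 * η / (1 + r) = 2 * (r - 1) * η := by
    have h1r : (1 : ℝ) + r ≠ 0 := by positivity
    field_simp
    nlinarith [hr2]
  -- third inequality
  have hthird : (1 - η) * (1 + η - 4 * η / (1 + r)) ≥ 0 := by
    rw [hdiv]
    have : 0 ≤ 1 + η - 2 * (r - 1) * η := by nlinarith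
    have h1η : 0 ≤ 1 - η := by linarith
    nlinarith
  -- the key quantity A
  have hA : 0 ≤ (η - 1 / 3) ^ 2 + 8 / 9 - (1 - η) * (1 + η - 2 * (r - 1) * η) := by
    nlinarith [sq_nonneg (η - 1/3), sq_nonneg η]
  have hs1 : (0 : ℝ) < s + 1 := by linarith
  have hfrac : 2 * (1 + r) * η * (η - 1 / 3) / (s + 1) ≤
      (η - 1 / 3) ^ 2 + 8 / 9 - (1 - η) * (1 + η - 2 * (r - 1) * η) := by
    rw [div_le_iff₀ hs1]
    have key : 2 * (1 + r) * η * (η - 1 / 3) ≤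
        ((η - 1 / 3) ^ 2 + 8 / 9 - (1 - η) * (1 + η - 2 * (r - 1) * η)) * (r * η + 1) := by
      have hid : ((η - 1 / 3) ^ 2 + 8 / 9 - (1 - η) * (1 + η - 2 * (r - 1) * η)) * (r * η + 1)
          - 2 * (1 + r) * η * (η - 1 / 3)
          = η * (1 - η) * ((8 * r / 3 - 2) + (6 - 4 * r) * η) := by
        linear_combination (2 * η ^ 2 - 2 * η ^ 3) * hr2
      have hpos : 0 ≤ η * (1 - η) * ((8 * r / 3 - 2) + (6 - 4 * r) * η) := by
        apply mul_nonneg (mul_nonneg hηpos.le (by linarith))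
        nlinarith
      linarith
    refine key.trans ?_
    exact mul_le_mul_of_nonneg_left (by linarith) hA
  have hmid : (η - 1 / 3) ^ 2 + 8 / 9 -
      2 * (1 + r) * η * (η - 1 / 3) / (s + 1) ≥
      (1 - η) * (1 + η - 4 * η / (1 + r)) := by
    rw [hdiv]
    linarith
  refine ⟨?_, hmid, hthird⟩
  linarith [hmid, hthird]
end

section
/- Let R > 0, let 1/3 < η ≤ 1, let 0 ≤ γ ≤ 1+√3, and let λ1, λ2, λ3, λ4 be real numbers with λ1 ≥ 0, λ2 ≥ 0, λ1 + λ2 = (1−η)R/2 and λ3 + λ4 = (1+η)R/2. Set S = λ1² + λ2² + λ3² + λ4² − R²/4 and assume S ≥ R²/12. Then (1+η)(λ3² + λ4²) − (1−η)(λ1² + λ2²) − (2/3)ηR² − (γηR/√3)·(√S − R/(2√3)) ≥ (3(1+√3−γ)/(4(1+√3)))·η·(η − 1/3)²·R². -/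
set_option maxHeartbeats 1000000

lemma polyK (s η : ℝ) (hη1 : 1/3 < η) (hη2 : η ≤ 1) (hs : s^2 = 3) (hs2 : s < 7/4) :
    ((s+3)/3*η)^2 ≤ (1+η)^2*(3*η^2-2*η+1)/2 := by
  nlinarith [mul_nonneg (by linarith : (0:ℝ) ≤ 7/4-s) (sq_nonneg η),
    sq_nonneg (2*η^2+η-1), sq_nonneg (η-1), sq_nonneg (3*η-1),
    mul_nonneg (mul_nonneg (by linarith : (0:ℝ) ≤ 3*η-1) (by linarith : (0:ℝ) ≤ 1-η)) (sq_nonneg η)]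

lemma polyG (s η : ℝ) (hη1 : 1/3 < η) (hη2 : η ≤ 1) (hs1 : 1 < s) :
    (0:ℝ) ≤ -(3/64)*η^4 + (1/32)*η^3 + (1/48+s/24)*η^2 + (3/32+s/24)*η - 1/64 := by
  nlinarith [mul_nonneg (by linarith : (0:ℝ) ≤ 3*η-1) (by linarith : (0:ℝ) ≤ 1-η),
    mul_nonneg (by linarith : (0:ℝ) ≤ s-1) (by linarith : (0:ℝ) ≤ η),
    sq_nonneg (η-1/3), sq_nonneg (η-1),
    mul_nonneg (mul_nonneg (by linarith : (0:ℝ) ≤ 3*η-1) (by linarith : (0:ℝ) ≤ 1-η)) (by linarith : (0:ℝ) ≤ η)]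

lemma polyP (s η : ℝ) (hη1 : 1/3 < η) (hη2 : η ≤ 1) (hs1 : 1 < s) :
    (0:ℝ) < (3*η^3-3*η^2+5*η-1)/8 + s*η/6 := by
  nlinarith [mul_nonneg (by linarith : (0:ℝ) ≤ s-1) (by linarith : (0:ℝ) ≤ η),
    sq_nonneg (η-1/3), sq_nonneg (η-1), mul_nonneg (sq_nonneg (η-1)) (by linarith : (0:ℝ) ≤ η)]

lemma auxG (s η x A B : ℝ) (hη1 : 1/3 < η) (hη2 : η ≤ 1)
    (hs : s^2 = 3) (hs1 : 1 < s) (hs2 : s < 7/4)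
    (hA : A ≤ (1-η)^2/4) (hB : (1+η)^2/8 ≤ B)
    (hx2 : x^2 = A + B - 1/4) (hx : s/6 ≤ x) :
    (1+η)*B - (1-η)*A - 2/3*η - (s+3)/3*η*x + (1+s)*η/6 ≥ 0 := by
  have hη0 : 0 < η := by linarith
  have hk0 : 0 ≤ (s+3)/3*η := by positivity
  have hc0 : (0:ℝ) < (3*η^2-2*η+1)/8 := by nlinarith only [sq_nonneg (3*η-1), hη1, hη2]
  set y := Real.sqrt ((3*η^2-2*η+1)/8) with hydef
  have hy0 : 0 ≤ y := Real.sqrt_nonneg _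
  have hy2 : y^2 = (3*η^2-2*η+1)/8 := Real.sq_sqrt hc0.le
  set P := (3*η^3-3*η^2+5*η-1)/8 + s*η/6 with hPdef
  have hP0 : 0 < P := polyP s η hη1 hη2 hs1
  have hQid : P^2 - ((s+3)/3*η)^2*((3*η^2-2*η+1)/8)
      = (3*η-1)*(1-η)*(-(3/64)*η^4 + (1/32)*η^3 + (1/48+s/24)*η^2 + (3/32+s/24)*η - 1/64) := by
    rw [hPdef]; linear_combination (η^2/36 - η^2*(3*η^2-2*η+1)/72) * hs
  have hQ : ((s+3)/3*η)^2*y^2 ≤ P^2 := by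
    rw [hy2]
    nlinarith only [mul_nonneg (mul_nonneg (by linarith : (0:ℝ) ≤ 3*η-1)
      (by linarith : (0:ℝ) ≤ 1-η)) (polyG s η hη1 hη2 hs1), hQid]
  have hky : (s+3)/3*η*y ≤ P := by
    by_contra hcon
    push_neg at hcon
    have ha0 : 0 < (s+3)/3*η*y := hP0.trans hcon
    have h1 : P*P < P*((s+3)/3*η*y) := mul_lt_mul_of_pos_left hcon hP0
    have h2 : P*((s+3)/3*η*y) < ((s+3)/3*η*y)*((s+3)/3*η*y) := mul_lt_mul_of_pos_right hcon ha0
    nlinarith only [hQ, h1, h2]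
  rcases le_total x y with hxy | hxy
  · -- case a
    have hA' : A = x^2 + 1/4 - B := by linarith
    rw [hA']
    have hx0 : 0 ≤ x := le_trans (by linarith) hx
    have h1 : (0:ℝ) ≤ (1-η)*((3*η^2-2*η+1)/8 - x^2) := by
      have hxx : x^2 ≤ y^2 := by nlinarith only [hxy, hx0, hy0]
      rw [hy2] at hxx
      have : (0:ℝ) ≤ 1-η := by linarith
      exact mul_nonneg this (by linarith)
    have hkx : (s+3)/3*η*x ≤ P := by
      have := mul_nonneg hk0 (by linarith : (0:ℝ) ≤ y - x)
      nlinarith only [this, hky]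
    linarith only [hB, h1, hkx, hPdef]
  · -- case b
    have hB' : B = x^2 + 1/4 - A := by linarith
    rw [hB']
    have h2y : (s+3)/3*η ≤ 2*(1+η)*y := by
      have hk2 : ((s+3)/3*η)^2 ≤ (2*(1+η)*y)^2 := by
        have heq : (2*(1+η)*y)^2 = (1+η)^2*(3*η^2-2*η+1)/2 := by
          linear_combination (4*(1+η)^2)*hy2
        linarith only [heq, polyK s η hη1 hη2 hs hs2]
      by_contra hcon
      push_neg at hcon
      have hb0 : 0 ≤ 2*(1+η)*y := mul_nonneg (by linarith) hy0
      have hc1 : 0 < (s+3)/3*η := by positivity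
      have h1 : 0 ≤ (2*(1+η)*y)*((s+3)/3*η - 2*(1+η)*y) :=
        mul_nonneg hb0 (by linarith)
      have h2 : (2*(1+η)*y)*((s+3)/3*η) < ((s+3)/3*η)*((s+3)/3*η) :=
        mul_lt_mul_of_pos_right hcon hc1
      nlinarith only [hk2, h1, h2]
    have hfac : (0:ℝ) ≤ (x-y)*((1+η)*(x+y) - (s+3)/3*η) := by
      apply mul_nonneg (by linarith)
      nlinarith only [h2y, mul_nonneg (by linarith : (0:ℝ) ≤ 1+η) (by linarith : (0:ℝ) ≤ x - y)]
    have hfy : (0:ℝ) ≤ (1+η)*y^2 - (s+3)/3*η*y + (-1/4+7*η/12-η^2/2+(1+s)*η/6) := by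
      rw [hPdef] at hky
      nlinarith only [hky, hy2]
    linarith only [hA, hfac, hfy]

lemma aux0 (R η A B : ℝ) (hη1 : 1/3 < η) (hη2 : η ≤ 1)
    (hA : A ≤ (1-η)^2*R^2/4) (hB : (1+η)^2*R^2/8 ≤ B) :
    (1+η)*B - (1-η)*A - 2/3*η*R^2 - 3/4*η*(η-1/3)^2*R^2 ≥ 0 := by
  nlinarith [mul_nonneg (by linarith : (0:ℝ) ≤ 1+η) (by linarith : (0:ℝ) ≤ B - (1+η)^2*R^2/8),
    mul_nonneg (by linarith : (0:ℝ) ≤ 1-η) (by linarith : (0:ℝ) ≤ (1-η)^2*R^2/4 - A),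
    mul_nonneg (mul_nonneg (by linarith : (0:ℝ) ≤ 3*η-1) (by linarith : (0:ℝ) ≤ 1-η)) (mul_nonneg (by linarith : (0:ℝ) ≤ 1+η) (sq_nonneg R))]

/-- Quantitative conclusion of Case 1 in the proof of Lemma 3.1. -/
theorem stmt_13 (R η γ l1 l2 l3 l4 : ℝ)
    (hR : 0 < R) (hη1 : 1 / 3 < η) (hη2 : η ≤ 1)
    (hγ0 : 0 ≤ γ) (hγ1 : γ ≤ 1 + Real.sqrt 3)
    (hl1 : 0 ≤ l1) (hl2 : 0 ≤ l2)
    (h12 : l1 + l2 = (1 - η) * R / 2) (h34 : l3 + l4 = (1 + η) * R / 2)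
    (hS : l1 ^ 2 + l2 ^ 2 + l3 ^ 2 + l4 ^ 2 - R ^ 2 / 4 ≥ R ^ 2 / 12) :
    (1 + η) * (l3 ^ 2 + l4 ^ 2) - (1 - η) * (l1 ^ 2 + l2 ^ 2) - (2 / 3) * η * R ^ 2 -
      (γ * η * R / Real.sqrt 3) *
        (Real.sqrt (l1 ^ 2 + l2 ^ 2 + l3 ^ 2 + l4 ^ 2 - R ^ 2 / 4) -
          R / (2 * Real.sqrt 3)) ≥
    (3 * (1 + Real.sqrt 3 - γ) / (4 * (1 + Real.sqrt 3))) * η * (η - 1 / 3) ^ 2 * R ^ 2 := by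
  have hs : Real.sqrt 3 ^ 2 = 3 := Real.sq_sqrt (by norm_num)
  have hs0 : (0:ℝ) ≤ Real.sqrt 3 := Real.sqrt_nonneg 3
  have hs1 : 1 < Real.sqrt 3 := by nlinarith
  have hs2 : Real.sqrt 3 < 7/4 := by nlinarith
  set s := Real.sqrt 3 with hsdef
  have hS0 : (0:ℝ) ≤ l1^2+l2^2+l3^2+l4^2 - R^2/4 := le_trans (by positivity) hS
  set x := Real.sqrt (l1 ^ 2 + l2 ^ 2 + l3 ^ 2 + l4 ^ 2 - R ^ 2 / 4) with hxdef
  have hx2 : x^2 = l1^2+l2^2+l3^2+l4^2 - R^2/4 := Real.sq_sqrt hS0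
  have hx0 : 0 ≤ x := Real.sqrt_nonneg _
  have hxlb : R*s/6 ≤ x := by
    have h1 : (R*s/6)^2 ≤ x^2 := by rw [hx2]; nlinarith only [hS, hs]
    nlinarith only [h1, hx0, mul_nonneg (mul_nonneg hR.le hs0) (by norm_num : (0:ℝ) ≤ 1/6)]
  have h12sq : (l1+l2)^2 = ((1-η)*R/2)^2 := by rw [h12]
  have h34sq : (l3+l4)^2 = ((1+η)*R/2)^2 := by rw [h34]
  have hA : l1^2+l2^2 ≤ (1-η)^2*R^2/4 := by
    nlinarith only [h12sq, mul_nonneg hl1 hl2]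
  have hB : (1+η)^2*R^2/8 ≤ l3^2+l4^2 := by
    nlinarith only [h34sq, sq_nonneg (l3-l4)]
  have hRR : (0:ℝ) < R^2 := by positivity
  have key := auxG s η (x/R) ((l1^2+l2^2)/R^2) ((l3^2+l4^2)/R^2) hη1 hη2 hs hs1 hs2
    (by rw [div_le_iff₀ hRR]; nlinarith only [hA])
    (by rw [le_div_iff₀ hRR]; nlinarith only [hB])
    (by rw [div_pow, hx2]; field_simp; ring)
    (by rw [le_div_iff₀ hR]; nlinarith only [hxlb])
  have L1 : (1+η)*(l3^2+l4^2) - (1-η)*(l1^2+l2^2) - 2/3*η*R^2 - (s+3)/3*η*R*x + (1+s)*η*R^2/6 ≥ 0 := by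
    have h2 := mul_nonneg hRR.le (ge_iff_le.mp key)
    have hexp : R^2 * ((1+η)*((l3^2+l4^2)/R^2) - (1-η)*((l1^2+l2^2)/R^2) - 2/3*η - (s+3)/3*η*(x/R) + (1+s)*η/6)
        = (1+η)*(l3^2+l4^2) - (1-η)*(l1^2+l2^2) - 2/3*η*R^2 - (s+3)/3*η*R*x + (1+s)*η*R^2/6 := by
      field_simp
    rw [hexp] at h2
    linarith only [h2]
  have L0 := aux0 R η (l1^2+l2^2) (l3^2+l4^2) hη1 hη2 hA hB
  have h1s : (0:ℝ) < 1+s := by linarith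
  have hγs : (0:ℝ) ≤ 1+s-γ := by linarith
  have hcomb : 0 ≤ (1+s-γ)*((1+η)*(l3^2+l4^2) - (1-η)*(l1^2+l2^2) - 2/3*η*R^2 - 3/4*η*(η-1/3)^2*R^2)
      + γ*((1+η)*(l3^2+l4^2) - (1-η)*(l1^2+l2^2) - 2/3*η*R^2 - (s+3)/3*η*R*x + (1+s)*η*R^2/6) :=
    add_nonneg (mul_nonneg hγs (ge_iff_le.mp L0)) (mul_nonneg hγ0 (ge_iff_le.mp L1))
  have hsne : s ≠ 0 := by positivity
  have h4sne : (4:ℝ)*(1+s) ≠ 0 := by positivity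
  have e1 : γ * η * R / s = γ*η*R*s/3 := by
    rw [div_eq_iff hsne]; linear_combination (-(γ*η*R/3))*hs
  have e1b : R / (2 * s) = R*s/6 := by
    rw [div_eq_iff (by positivity : (2:ℝ)*s ≠ 0)]; linear_combination (-(R/3))*hs
  have e2 : 3 * (1 + s - γ) / (4 * (1 + s)) = 3/4 - 3*γ*(s-1)/8 := by
    rw [div_eq_iff h4sne]; linear_combination (3*γ/2)*hs
  rw [e1, e1b, e2, ge_iff_le, ← sub_nonneg]
  have hidty : ((1 + η) * (l3 ^ 2 + l4 ^ 2) - (1 - η) * (l1 ^ 2 + l2 ^ 2) - (2 / 3) * η * R ^ 2 -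
      (γ * η * R * s / 3) * (x - R * s / 6) - (3/4 - 3*γ*(s-1)/8) * η * (η - 1 / 3) ^ 2 * R ^ 2) * (1+s)
      = (1+s-γ)*((1+η)*(l3^2+l4^2) - (1-η)*(l1^2+l2^2) - 2/3*η*R^2 - 3/4*η*(η-1/3)^2*R^2)
      + γ*((1+η)*(l3^2+l4^2) - (1-η)*(l1^2+l2^2) - 2/3*η*R^2 - (s+3)/3*η*R*x + (1+s)*η*R^2/6) := by
    linear_combination (γ*η*R*(-x/3 + 3/8*(η-1/3)^2*R + (1+s)*R/18))*hs
  nlinarith only [hcomb, hidty, h1s]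
end

section
/- Let R > 0, let η be a real number with c̃ < η < 1/√3 where c̃ = (√(5+4√3) − (1+√3))/√3, let 0 ≤ γ ≤ 1+√3, let x be a real number with 0 ≤ x ≤ (1−η)R/4, and let y ≥ 0. Then (η/12)·(3η² + 1)·R² + 2(1+η)y² − 2(1−η)x² + (γηR/√3)·(√((η²/4)R² + 2x² + 2y²) − R/(2√3)) > 0. -/
theorem interp_aux (Fe c a b q Fa Fb : ℝ) (hc : 0 ≤ c) (hab : 0 < b - a)
    (h1 : 0 ≤ q - a) (h2 : 0 ≤ b - q) (hFa : 0 < Fa) (hFb : 0 < Fb)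
    (hid : (b - a) * Fe = (b - q) * Fa + (q - a) * Fb + c * (q - a) * (b - q) * (b - a)) :
    0 < Fe := by
  rcases le_or_gt (2 * q) (a + b) with h | h
  · have hbq : 0 < b - q := by linarith
    nlinarith [mul_pos hbq hFa, mul_nonneg h1 hFb.le,
      mul_nonneg (mul_nonneg (mul_nonneg hc h1) h2) hab.le]
  · have haq : 0 < q - a := by linarith
    nlinarith [mul_pos haq hFb, mul_nonneg h2 hFa.le,
      mul_nonneg (mul_nonneg (mul_nonneg hc h1) h2) hab.le]

set_option maxHeartbeats 1600000 in
/-- Full conclusion of Case 2 in the proof of Lemma 3.1. -/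
theorem stmt_14 (R η γ x y : ℝ) (hR : 0 < R)
    (hη1 : (Real.sqrt (5 + 4 * Real.sqrt 3) - (1 + Real.sqrt 3)) / Real.sqrt 3 < η)
    (hη2 : η < 1 / Real.sqrt 3)
    (hγ0 : 0 ≤ γ) (hγ1 : γ ≤ 1 + Real.sqrt 3)
    (hx0 : 0 ≤ x) (hx1 : x ≤ (1 - η) * R / 4) (hy : 0 ≤ y) :
    (η / 12) * (3 * η ^ 2 + 1) * R ^ 2 + 2 * (1 + η) * y ^ 2 - 2 * (1 - η) * x ^ 2 +
      (γ * η * R / Real.sqrt 3) *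
        (Real.sqrt ((η ^ 2 / 4) * R ^ 2 + 2 * x ^ 2 + 2 * y ^ 2) -
          R / (2 * Real.sqrt 3)) > 0 := by
  set s : ℝ := Real.sqrt 3 with hs_def
  have hs2 : s ^ 2 = 3 := Real.sq_sqrt (by norm_num)
  have hs0 : (0:ℝ) < s := Real.sqrt_pos.mpr (by norm_num)
  set u : ℝ := Real.sqrt (5 + 4 * s) with hu_def
  have hu0 : (0:ℝ) ≤ u := Real.sqrt_nonneg _
  have hu2 : u ^ 2 = 5 + 4 * s := Real.sq_sqrt (by positivity)
  set S : ℝ := Real.sqrt ((η ^ 2 / 4) * R ^ 2 + 2 * x ^ 2 + 2 * y ^ 2) with hS_def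
  have hS0 : (0:ℝ) ≤ S := Real.sqrt_nonneg _
  have hS2 : S ^ 2 = (η ^ 2 / 4) * R ^ 2 + 2 * x ^ 2 + 2 * y ^ 2 :=
    Real.sq_sqrt (by positivity)
  clear_value s u S
  have hs_lb : (1.7:ℝ) < s := by nlinarith
  have hs_ub : s < 1.8 := by nlinarith
  have hulb : 1 + s < u := by nlinarith
  have hult : u < η * s + (1 + s) := by
    have := (div_lt_iff₀ hs0).mp hη1
    linarith
  have hP : 3 * η ^ 2 + (6 + 2 * s) * η - (1 + 2 * s) > 0 := by nlinarith
  have hη0 : 0 < η := by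
    have : (u - (1 + s)) / s > 0 := div_pos (by linarith) hs0
    linarith
  have hηs : η * s < 1 := by
    have := (lt_div_iff₀ hs0).mp hη2; linarith
  clear hη1 hη2 hult hulb hu2 hu0 hu_def hs_def
  have hη25 : 2 / 5 < η := by nlinarith
  have hη1' : η < 3 / 5 := by nlinarith
  have hSa : η * R / 2 ≤ S := by
    nlinarith [sq_nonneg x, sq_nonneg y, mul_pos hη0 hR, mul_nonneg hS0 hS0]
  have hrw : (γ * η * R / s) * (S - R / (2 * s)) = γ * η * R * (2 * s * S - R) / 6 := by
    have h := hs0.ne'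
    field_simp
    linear_combination (-2 * γ * (2 * s * S - R)) * hs2
  rw [hrw]
  clear hrw hS_def
  rcases le_or_gt R (2 * s * S) with hc | hc
  · -- the Weyl term is nonnegative; the rest is positive
    have hT : 0 ≤ γ * η * R * (2 * s * S - R) / 6 := by
      have h1 : 0 ≤ γ * η * R := by positivity
      have h2 : 0 ≤ 2 * s * S - R := by linarith
      exact div_nonneg (mul_nonneg h1 h2) (by norm_num)
    have hA : 0 < (η / 12) * (3 * η ^ 2 + 1) * R ^ 2 + 2 * (1 + η) * y ^ 2 -
        2 * (1 - η) * x ^ 2 := by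
      nlinarith [mul_nonneg hx0 (sub_nonneg.mpr hx1), sq_nonneg y, mul_pos hR hR,
        mul_nonneg (sub_nonneg.mpr hx1) (sub_nonneg.mpr hx1),
        mul_pos (mul_pos hR hR) hη0, sq_nonneg (η - 2/5)]
    linarith
  · -- Case 2 : S < R*s/6
    have hη1'' : η < 1 := by linarith
    have hγT : (1 + s) * η * R * (2 * s * S - R) / 6 ≤ γ * η * R * (2 * s * S - R) / 6 := by
      have h2 : 0 ≤ R - 2 * s * S := by linarith
      have h1 : 0 ≤ (1 + s - γ) * (η * R * (R - 2 * s * S)) :=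
        mul_nonneg (by linarith) (mul_nonneg (mul_nonneg hη0.le hR.le) h2)
      nlinarith [h1]
    have hx2 : 2 * x ^ 2 = S ^ 2 - (η ^ 2 / 4) * R ^ 2 - 2 * y ^ 2 := by linarith
    have hba : 0 < R * (s - 3 * η) / 6 := by
      have h3 : 0 < s - 3 * η := by nlinarith [mul_pos hs0 (show (0:ℝ) < 1 - η * s by linarith)]
      exact div_pos (mul_pos hR h3) (by norm_num)
    have hFa : 0 < R ^ 2 * η * (3 * η ^ 2 + (6 + 2 * s) * η - (1 + 2 * s)) / 12 +
        4 * y ^ 2 := by nlinarith [mul_pos (mul_pos (mul_pos hR hR) hη0) hP, sq_nonneg y]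
    have hFb : 0 < R ^ 2 * (3 * η ^ 2 + 2 * η - 1) / 12 + 4 * y ^ 2 := by
      have hq : 0 < 3 * η ^ 2 + 2 * η - 1 := by
        nlinarith [mul_pos hη0 (show (0:ℝ) < η - 2/5 by linarith)]
      nlinarith [mul_pos (mul_pos hR hR) hq, sq_nonneg y]
    set Fe : ℝ := (η / 12) * (3 * η ^ 2 + 1) * R ^ 2 + 2 * (1 + η) * y ^ 2 -
        (1 - η) * (S ^ 2 - (η ^ 2 / 4) * R ^ 2 - 2 * y ^ 2) +
        (1 + s) * η * R * (2 * s * S - R) / 6 with hFe_def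
    clear_value Fe
    have hba' : 0 < R * s / 6 - η * R / 2 := by nlinarith [hba]
    have hid : (R * s / 6 - η * R / 2) * Fe =
        (R * s / 6 - S) * (R ^ 2 * η * (3 * η ^ 2 + (6 + 2 * s) * η - (1 + 2 * s)) / 12 +
          4 * y ^ 2) +
        (S - η * R / 2) * (R ^ 2 * (3 * η ^ 2 + 2 * η - 1) / 12 + 4 * y ^ 2) +
        (1 - η) * (S - η * R / 2) * (R * s / 6 - S) * (R * s / 6 - η * R / 2) := by
      linear_combination (R * s / 6 - η * R / 2) * hFe_def +
        ((-1/36) * R^2 * S + (1/12) * R^2 * η * S + (1/18) * R^2 * η * S * s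
        - (1/6) * R^2 * η^2 * S + (1/72) * R^3 * η - (1/24) * R^3 * η^2) * hs2
    have hss : S * s ^ 2 = 3 * S := by rw [hs2]; ring
    have hbS : 0 ≤ R * s / 6 - S := by
      nlinarith [mul_pos hs0 (show (0:ℝ) < R - 2 * s * S by linarith), hss]
    have hSa' : 0 ≤ S - η * R / 2 := by linarith
    have hFepos : 0 < Fe :=
      interp_aux Fe (1 - η) (η * R / 2) (R * s / 6) S _ _ (by linarith) hba' hSa' hbS hFa hFb hid
    have hgoalF : (η / 12) * (3 * η ^ 2 + 1) * R ^ 2 + 2 * (1 + η) * y ^ 2 -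
        2 * (1 - η) * x ^ 2 + (1 + s) * η * R * (2 * s * S - R) / 6 = Fe := by
      linear_combination -hFe_def - (1 - η) * hx2
    linarith
end

section
/- Let R > 0, let 0 ≤ γ < 1+√3, and let λ1, λ2, λ3, λ4 be nonnegative real numbers with λ1 + λ2 + λ3 + λ4 = R. Set η = ((λ3 + λ4) − (λ1 + λ2))/R and S = λ1² + λ2² + λ3² + λ4² − R²/4, and assume c̃ < η ≤ 1, where c̃ = (√(5+4√3) − (1+√3))/√3. Then for every real number w with |w| ≤ (γ/(2√3))·| √S − R/(2√3) |, one has (1+η)(λ3² + λ4²) − (1−η)(λ1² + λ2²) − 2ηR·(R/3 + w) > 0. -/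
private lemma key_one (t R η x y : ℝ) (ht : t^2 = 3) (ht1 : 1 < t) (ht2 : t < 2)
    (hR : 0 < R) (hη0 : 0 < η) (hη1 : η ≤ 1) (hx0 : 0 ≤ x) (hy0 : 0 ≤ y)
    (hQ : 0 < 3*η^2+(6+2*t)*η-(1+2*t)) :
    2*η*(1+t)*(R^2/12 - (R^2*η^2/4+x+y)) <
      (R^2*η*(3*η^2+1)/12+(1+η)*y-(1-η)*x)*(1+t*η) := by
  have htpos : 0 < t := by linarith
  have hK : 0 < 3*t*η^3+(9+6*t)*η^2+t*η-1-2*t := by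
    have h1 : 0 < t*η+1 := by nlinarith
    have h2 : (t^2-3)*(2*η^2-2*η) = 0 := by rw [ht]; ring
    nlinarith [mul_pos h1 hQ, h2]
  have hCx : 0 < t*η^2+(3+t)*η-1 := by
    have h2 : (t^2-3)*(2-2*η) = 0 := by rw [ht]; ring
    have h3 : 0 ≤ (t-1)*(1-η) := mul_nonneg (by linarith) (by linarith)
    nlinarith [mul_pos htpos hQ, h2, h3]
  have hCy : 0 < (1+η)*(1+t*η)+2*η*(1+t) := by
    nlinarith [mul_pos htpos hη0, mul_pos (mul_pos htpos hη0) hη0]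
  have f0 : 0 < R^2*η*(3*t*η^3+(9+6*t)*η^2+t*η-1-2*t) :=
    mul_pos (by positivity) hK
  have f1 : 0 ≤ y*((1+η)*(1+t*η)+2*η*(1+t)) := mul_nonneg hy0 hCy.le
  have f2 : 0 ≤ x*(t*η^2+(3+t)*η-1) := mul_nonneg hx0 hCx.le
  have hid : (R^2*η*(3*η^2+1)/12+(1+η)*y-(1-η)*x)*(1+t*η)
      - 2*η*(1+t)*(R^2/12 - (R^2*η^2/4+x+y))
      = R^2*η*(3*t*η^3+(9+6*t)*η^2+t*η-1-2*t)/12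
        + y*((1+η)*(1+t*η)+2*η*(1+t)) + x*(t*η^2+(3+t)*η-1) := by ring
  linarith [hid, f0, f1, f2]

private lemma key_two (t R η x y : ℝ) (ht : t^2 = 3) (ht1 : 1 < t) (ht2 : t < 2)
    (hR : 0 < R) (hη0 : 0 < η) (hη1 : η ≤ 1) (hx0 : 0 ≤ x) (hy0 : 0 ≤ y)
    (hx2 : x ≤ (1-η)^2*R^2/8) (hy2 : y ≤ (1+η)^2*R^2/8)
    (hQ : 0 < 3*η^2+(6+2*t)*η-(1+2*t)) :
    2*η*(1+t)*((R^2*η^2/4+x+y) - R^2/12) ≤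
      (R^2*η*(3*η^2+1)/12+(1+η)*y-(1-η)*x)*(1+t*η) := by
  have htpos : 0 < t := by linarith
  have hH : 0 ≤ 1+(3*t+1)*η-t*η^2 := by
    nlinarith [mul_nonneg (mul_nonneg htpos.le hη0.le) (by linarith : (0:ℝ) ≤ 1-η),
      mul_nonneg htpos.le hη0.le]
  have hxH : x*(1+(3*t+1)*η-t*η^2) ≤ ((1-η)^2*R^2/8)*(1+(3*t+1)*η-t*η^2) :=
    mul_le_mul_of_nonneg_right hx2 hH
  rcases le_or_gt (t*η) 1 with h | h
  · -- subcase t*η ≤ 1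
    have hr : 0 < (18+36*t)*η^2-(30+14*t)*η+6*t := by
      nlinarith [sq_nonneg (2*(18+36*t)*η-(30+14*t)), ht, ht1, ht2,
        (by linarith : (0:ℝ) < 72+144*t)]
    have hF1 : 0 ≤ 2*η*(-3*t*η^2+(3*t+3)*η+(3+2*t)) - 3*(1-η)*(1+(3*t+1)*η-t*η^2) := by
      have h2 : (t^2-3)*(6*η^2-6*η) = 0 := by rw [ht]; ring
      nlinarith [mul_nonneg (by linarith : (0:ℝ) ≤ 1-t*η) hQ.le, hr, h2]
    have hyterm : 0 ≤ y*((1-η)*(1-t*η)) :=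
      mul_nonneg hy0 (mul_nonneg (by linarith) (by linarith))
    have f3 : 0 ≤ R^2*((1-η)*(2*η*(-3*t*η^2+(3*t+3)*η+(3+2*t))
        - 3*(1-η)*(1+(3*t+1)*η-t*η^2))) :=
      mul_nonneg (by positivity) (mul_nonneg (by linarith) hF1)
    have hid : (R^2*η*(3*η^2+1)/12+(1+η)*y-(1-η)*x)*(1+t*η)
        - 2*η*(1+t)*((R^2*η^2/4+x+y) - R^2/12)
        = R^2*((1-η)*(2*η*(-3*t*η^2+(3*t+3)*η+(3+2*t))
            - 3*(1-η)*(1+(3*t+1)*η-t*η^2)))/24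
          + y*((1-η)*(1-t*η))
          + (((1-η)^2*R^2/8)*(1+(3*t+1)*η-t*η^2) - x*(1+(3*t+1)*η-t*η^2)) := by ring
    linarith [hid, f3, hyterm, hxH]
  · -- subcase 1 < t*η
    have hyb : ((1+η)^2*R^2/8)*((1-η)*(1-t*η)) ≤ y*((1-η)*(1-t*η)) := by
      apply mul_le_mul_of_nonpos_right hy2
      apply mul_nonpos_of_nonneg_of_nonpos (by linarith) (by linarith)
    have hF2 : 0 ≤ 4*η*((6-2*t)+(3*t*η-3)*(1-η)) := by
      apply mul_nonneg (by linarith)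
      have := mul_nonneg (by linarith : (0:ℝ) ≤ 3*t*η-3) (by linarith : (0:ℝ) ≤ 1-η)
      linarith
    have f3 : 0 ≤ R^2*((1-η)*(4*η*((6-2*t)+(3*t*η-3)*(1-η)))) :=
      mul_nonneg (by positivity) (mul_nonneg (by linarith) hF2)
    have hid : (R^2*η*(3*η^2+1)/12+(1+η)*y-(1-η)*x)*(1+t*η)
        - 2*η*(1+t)*((R^2*η^2/4+x+y) - R^2/12)
        = R^2*((1-η)*(4*η*((6-2*t)+(3*t*η-3)*(1-η))))/24
          + (y*((1-η)*(1-t*η)) - ((1+η)^2*R^2/8)*((1-η)*(1-t*η)))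
          + (((1-η)^2*R^2/8)*(1+(3*t+1)*η-t*η^2) - x*(1+(3*t+1)*η-t*η^2)) := by ring
    linarith [hid, f3, hyb, hxH]

private lemma sqrt5_lemma (t : ℝ) (ht : t^2 = 3) (ht0 : 0 ≤ t) : (1+t)^2 < 5+4*t := by
  nlinarith

private lemma Q_pos (t η u : ℝ) (ht : t^2 = 3) (hu2 : u^2 = 5+4*t) (hu0 : 0 ≤ u)
    (htpos : 0 < t) (hη0 : 0 < η) (hηt : u < η*t + (1+t)) :
    0 < 3*η^2+(6+2*t)*η-(1+2*t) := by
  have hsp : 0 < η*t + (1+t) + u := by positivity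
  have hdp : 0 < (η*t + (1+t)) - u := by linarith
  have e : (η*t+(1+t))^2 - (5+4*t) =
      3*η^2+(6+2*t)*η-(1+2*t) + (t^2-3)*(η^2+2*η+1) := by ring
  have h0 : (t^2-3)*(η^2+2*η+1) = 0 := by rw [ht]; ring
  nlinarith [mul_pos hdp hsp, hu2, e, h0]

private lemma S_nonneg (l1 l2 l3 l4 R : ℝ) (hsum : l1 + l2 + l3 + l4 = R) :
    0 ≤ l1 ^ 2 + l2 ^ 2 + l3 ^ 2 + l4 ^ 2 - R ^ 2 / 4 := by
  subst hsum
  nlinarith [sq_nonneg (l1-l2), sq_nonneg (l3-l4), sq_nonneg (l1+l2-l3-l4)]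

set_option maxHeartbeats 2000000 in
/-- Pointwise algebraic heart
 of Lemma 3.1 and Theorem 1.1: positivity of the term I
of inequality (3.1) for `η > c̃`. -/
theorem stmt_15 (R γ l1 l2 l3 l4 η S : ℝ) (hR : 0 < R)
    (hγ0 : 0 ≤ γ) (hγ1 : γ < 1 + Real.sqrt 3)
    (hl1 : 0 ≤ l1) (hl2 : 0 ≤ l2) (hl3 : 0 ≤ l3) (hl4 : 0 ≤ l4)
    (hsum : l1 + l2 + l3 + l4 = R)
    (hη : η = ((l3 + l4) - (l1 + l2)) / R)
    (hS : S = l1 ^ 2 + l2 ^ 2 + l3 ^ 2 + l4 ^ 2 - R ^ 2 / 4)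
    (hct : (Real.sqrt (5 + 4 * Real.sqrt 3) - (1 + Real.sqrt 3)) / Real.sqrt 3 < η)
    (hη1 : η ≤ 1) :
    ∀ w : ℝ, |w| ≤ (γ / (2 * Real.sqrt 3)) * |Real.sqrt S - R / (2 * Real.sqrt 3)| →
      (1 + η) * (l3 ^ 2 + l4 ^ 2) - (1 - η) * (l1 ^ 2 + l2 ^ 2) -
        2 * η * R * (R / 3 + w) > 0 := by
  intro w hw
  set t := Real.sqrt 3 with htdef
  clear_value t
  have ht : t^2 = 3 := by rw [htdef]; exact Real.sq_sqrt (by norm_num)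
  have ht0 : 0 ≤ t := by rw [htdef]; exact Real.sqrt_nonneg 3
  have ht1 : 1 < t := by
    rw [htdef]; exact (Real.lt_sqrt (by norm_num)).2 (by norm_num)
  have ht2 : t < 2 := by
    rw [htdef]; exact (Real.sqrt_lt' (by norm_num)).2 (by norm_num)
  have htpos : 0 < t := by linarith
  have htne : t ≠ 0 := htpos.ne'
  -- the constant u
  set u := Real.sqrt (5 + 4*t) with hudef
  clear_value u
  have hu0 : 0 ≤ u := by rw [hudef]; exact Real.sqrt_nonneg _
  have hu2 : u^2 = 5 + 4*t := by rw [hudef]; exact Real.sq_sqrt (by linarith)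
  rw [div_lt_iff₀ htpos] at hct
  have hηt : u < η*t + (1+t) := by linarith
  have hu1t : 1+t < u := by
    rw [hudef]
    exact (Real.lt_sqrt (by positivity)).2 (sqrt5_lemma t ht ht0)
  have hη0 : 0 < η := by
    have hηtp : 0 < η*t := by linarith
    have hmd : η*t/t = η := mul_div_cancel_right₀ η htne
    rw [← hmd]; exact div_pos hηtp htpos
  -- the quadratic Q is positive
  have hQ : 0 < 3*η^2+(6+2*t)*η-(1+2*t) := Q_pos t η u ht hu2 hu0 htpos hη0 hηt
  -- relations between the lᵢ, η, R
  have hRne : R ≠ 0 := hR.ne'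
  have he : η*R = (l3+l4) - (l1+l2) := by rw [hη]; exact div_mul_cancel₀ _ hRne
  have ha : l1 + l2 = R*(1-η)/2 := by linear_combination (hsum + he)/2
  have hb : l3 + l4 = R*(1+η)/2 := by linear_combination (hsum - he)/2
  -- S ≥ 0 and s = √S
  have hS0 : 0 ≤ S := by rw [hS]; exact S_nonneg l1 l2 l3 l4 R hsum
  set s := Real.sqrt S with hsdef
  clear_value s
  have hs0 : 0 ≤ s := by rw [hsdef]; exact Real.sqrt_nonneg _
  have hs2 : s^2 = S := by rw [hsdef]; exact Real.sq_sqrt hS0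
  have hSeq : S = R^2*η^2/4 + (l1-l2)^2/2 + (l3-l4)^2/2 := by
    linear_combination hS + ((l1+l2+R*(1-η)/2)/2)*ha + ((l3+l4+R*(1+η)/2)/2)*hb
  have hslb : R*η/2 ≤ s := by
    rw [hsdef]
    refine (Real.le_sqrt (by positivity) hS0).2 ?_
    rw [hSeq]
    have he2 : (R*η/2)^2 = R^2*η^2/4 := by ring
    linarith [sq_nonneg (l1-l2), sq_nonneg (l3-l4), he2]
  -- bounds on x, y
  have ha2 : (l1+l2)^2 = (1-η)^2*R^2/4 := by rw [ha]; ring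
  have hb2 : (l3+l4)^2 = (1+η)^2*R^2/4 := by rw [hb]; ring
  have hx2 : (l1-l2)^2/2 ≤ (1-η)^2*R^2/8 := by
    have h12 : 0 ≤ l1*l2 := mul_nonneg hl1 hl2
    have hd2 : (l1-l2)^2 = (l1+l2)^2 - 4*(l1*l2) := by ring
    linarith [ha2, hd2, h12]
  have hy2 : (l3-l4)^2/2 ≤ (1+η)^2*R^2/8 := by
    have h34 : 0 ≤ l3*l4 := mul_nonneg hl3 hl4
    have hd2 : (l3-l4)^2 = (l3+l4)^2 - 4*(l3*l4) := by ring
    linarith [hb2, hd2, h34]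
  -- instantiate the key lemmas
  have key1 := key_one t R η ((l1-l2)^2/2) ((l3-l4)^2/2) ht ht1 ht2 hR hη0 hη1
    (by positivity) (by positivity) hQ
  have key2 := key_two t R η ((l1-l2)^2/2) ((l3-l4)^2/2) ht ht1 ht2 hR hη0 hη1
    (by positivity) (by positivity) hx2 hy2 hQ
  have hAeq : (1+η)*(l3^2+l4^2) - (1-η)*(l1^2+l2^2) - 2*η*R^2/3 =
      R^2*η*(3*η^2+1)/12+(1+η)*((l3-l4)^2/2)-(1-η)*((l1-l2)^2/2) := by
    linear_combination ((1+η)*(l3+l4+R*(1+η)/2)/2)*hb - ((1-η)*(l1+l2+R*(1-η)/2)/2)*ha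
  set A := (1+η)*(l3^2+l4^2) - (1-η)*(l1^2+l2^2) - 2*η*R^2/3 with hAdef
  clear_value A
  have hA1 : 2*η*(1+t)*(R^2/12 - S) < A*(1+t*η) := by
    rw [hSeq, hAeq]; exact key1
  have hA2 : 2*η*(1+t)*(S - R^2/12) ≤ A*(1+t*η) := by
    rw [hSeq, hAeq]; exact key2
  have h1tη : 0 < 1 + t*η := by positivity
  have hA : 0 < A := by
    rcases lt_or_ge 0 A with h | h
    · exact h
    · exfalso
      have h3 : 0 < A*(1+t*η) := by linarith
      have h4 : A*(1+t*η) ≤ 0 := mul_nonpos_of_nonpos_of_nonneg h h1tη.le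
      linarith
  have habs : 2*η*(1+t)*|S - R^2/12| ≤ A*(1+t*η) := by
    rcases abs_cases (S - R^2/12) with ⟨h, _⟩ | ⟨h, _⟩
    · rw [h]; exact hA2
    · rw [h]; linarith [hA1]
  -- bound |s - R/(2t)|
  have hc2 : (R/(2*t))^2 = R^2/12 := by
    rw [div_pow, mul_pow, ht]; norm_num
  have hmul : (s - R/(2*t))*(s + R/(2*t)) = S - R^2/12 := by
    have h' : (s - R/(2*t))*(s + R/(2*t)) = s^2 - (R/(2*t))^2 := by ring
    rw [h', hs2, hc2]
  have hscpos : 0 ≤ s + R/(2*t) := by positivity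
  have h1abs : |s - R/(2*t)| * (s + R/(2*t)) = |S - R^2/12| := by
    calc |s - R/(2*t)| * (s + R/(2*t)) = |s - R/(2*t)| * |s + R/(2*t)| := by
          rw [abs_of_nonneg hscpos]
      _ = |(s - R/(2*t))*(s + R/(2*t))| := (abs_mul _ _).symm
      _ = |S - R^2/12| := by rw [hmul]
  have hsc : R*(1+t*η)/(2*t) ≤ s + R/(2*t) := by
    rw [show R*(1+t*η)/(2*t) = R*η/2 + R/(2*t) by field_simp [htne]; ring]
    linarith
  have hd : |s - R/(2*t)| * (R*(1+t*η)/(2*t)) ≤ |S - R^2/12| := by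
    calc |s - R/(2*t)| * (R*(1+t*η)/(2*t)) ≤ |s - R/(2*t)| * (s + R/(2*t)) :=
          mul_le_mul_of_nonneg_left hsc (abs_nonneg _)
      _ = |S - R^2/12| := h1abs
  have hd' : |s - R/(2*t)| * (R*(1+t*η)) ≤ 2*t*|S - R^2/12| := by
    have h := mul_le_mul_of_nonneg_left hd (by linarith : (0:ℝ) ≤ 2*t)
    calc |s - R/(2*t)| * (R*(1+t*η)) = 2*t*(|s - R/(2*t)| * (R*(1+t*η)/(2*t))) := by
          field_simp [htne]
      _ ≤ 2*t*|S - R^2/12| := h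
  have hw' : 2*t*|w| ≤ γ*|s - R/(2*t)| := by
    have h := mul_le_mul_of_nonneg_left hw (by linarith : (0:ℝ) ≤ 2*t)
    calc 2*t*|w| ≤ 2*t*((γ/(2*t))*|s - R/(2*t)|) := h
      _ = γ*|s - R/(2*t)| := by field_simp [htne]
  -- final assembly
  have q1 : η*R*(1+t)*(1+t*η)*(2*t*|w|) ≤ η*R*(1+t)*(1+t*η)*(γ*|s - R/(2*t)|) :=
    mul_le_mul_of_nonneg_left hw' (by positivity)
  have q2 : γ*η*(1+t)*(|s - R/(2*t)| * (R*(1+t*η))) ≤ γ*η*(1+t)*(2*t*|S - R^2/12|) :=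
    mul_le_mul_of_nonneg_left hd' (by positivity)
  have q3 : t*γ*(2*η*(1+t)*|S - R^2/12|) ≤ t*γ*(A*(1+t*η)) :=
    mul_le_mul_of_nonneg_left habs (by positivity)
  have q4 : t*γ*(A*(1+t*η)) < t*(1+t)*(A*(1+t*η)) := by
    have hp : 0 < t*(A*(1+t*η)) := mul_pos htpos (mul_pos hA h1tη)
    have := mul_lt_mul_of_pos_right hγ1 hp
    linarith [this]
  have chain : η*R*(1+t)*(1+t*η)*(2*t*|w|) < t*(1+t)*(A*(1+t*η)) := by
    calc η*R*(1+t)*(1+t*η)*(2*t*|w|)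
        ≤ η*R*(1+t)*(1+t*η)*(γ*|s - R/(2*t)|) := q1
      _ = γ*η*(1+t)*(|s - R/(2*t)| * (R*(1+t*η))) := by ring
      _ ≤ γ*η*(1+t)*(2*t*|S - R^2/12|) := q2
      _ = t*γ*(2*η*(1+t)*|S - R^2/12|) := by ring
      _ ≤ t*γ*(A*(1+t*η)) := q3
      _ < t*(1+t)*(A*(1+t*η)) := q4
  have hfinal : 2*η*R*|w| < A := by
    have hK : 0 < t*((1+t)*(1+t*η)) := by positivity
    have h2 : (2*η*R*|w|)*(t*((1+t)*(1+t*η))) < A*(t*((1+t)*(1+t*η))) := by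
      linarith [chain]
    exact lt_of_mul_lt_mul_right h2 hK.le
  have hwle : 2*η*R*w ≤ 2*η*R*|w| :=
    mul_le_mul_of_nonneg_left (le_abs_self w) (by positivity)
  have hfin : (1 + η) * (l3 ^ 2 + l4 ^ 2) - (1 - η) * (l1 ^ 2 + l2 ^ 2) -
      2 * η * R * (R / 3 + w) = A - 2*η*R*w := by rw [hAdef]; ring
  rw [hfin]
  linarith
end

section
/- Let R > 0, let 0 ≤ γ ≤ (1+√3)/√3, and let λ1, λ2, λ3, λ4 be nonnegative real numbers with λ1 + λ2 + λ3 + λ4 = R. Set η = ((λ3 + λ4) − (λ1 + λ2))/R and S = λ1² + λ2² + λ3² + λ4² − R²/4, and assume 1/3 < η ≤ 1. Then for every real number w with |w| ≤ (γ/(2√3))·| √S − R/(2√3) |, one has (1+η)(λ3² + λ4²) − (1−η)(λ1² + λ2²) − 2ηR·(R/3 + w) > 0. -/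
set_option maxHeartbeats 1000000

/-- Pointwise algebraic heart of Claim 4.1 and Theorem 1.3: positivity of the term I
of inequality (3.1) for `η > 1/3` under the stronger Weyl pinching. -/
theorem stmt_16 (R γ l1 l2 l3 l4 η S : ℝ) (hR : 0 < R)
    (hγ0 : 0 ≤ γ) (hγ1 : γ ≤ (1 + Real.sqrt 3) / Real.sqrt 3)
    (hl1 : 0 ≤ l1) (hl2 : 0 ≤ l2) (hl3 : 0 ≤ l3) (hl4 : 0 ≤ l4)
    (hsum : l1 + l2 + l3 + l4 = R)
    (hη : η = ((l3 + l4) - (l1 + l2)) / R)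
    (hS : S = l1 ^ 2 + l2 ^ 2 + l3 ^ 2 + l4 ^ 2 - R ^ 2 / 4)
    (hη0 : 1 / 3 < η) (hη1 : η ≤ 1) :
    ∀ w : ℝ, |w| ≤ (γ / (2 * Real.sqrt 3)) * |Real.sqrt S - R / (2 * Real.sqrt 3)| →
      (1 + η) * (l3 ^ 2 + l4 ^ 2) - (1 - η) * (l1 ^ 2 + l2 ^ 2) -
        2 * η * R * (R / 3 + w) > 0 := by
  intro w hw
  set s := Real.sqrt 3 with hs_def
  have hs0 : (0:ℝ) < s := Real.sqrt_pos.mpr (by norm_num)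
  have hs3 : s ^ 2 = 3 := Real.sq_sqrt (by norm_num)
  have hs2 : s < 2 := by nlinarith only [hs3, hs0]
  have hRne : R ≠ 0 := ne_of_gt hR
  have hηR : η * R = (l3 + l4) - (l1 + l2) := by
    rw [hη]; field_simp
  have hA : 2 * (l1 + l2) = (1 - η) * R := by linear_combination hsum + hηR
  have hB : 2 * (l3 + l4) = (1 + η) * R := by linear_combination hsum - hηR
  have hR2 : R ^ 2 = (l1 + l2 + l3 + l4) ^ 2 := by rw [hsum]
  have hS0 : 0 ≤ S := by
    rw [hS]
    linarith [sq_nonneg (l1 - l2), sq_nonneg (l1 - l3), sq_nonneg (l1 - l4),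
      sq_nonneg (l2 - l3), sq_nonneg (l2 - l4), sq_nonneg (l3 - l4), hR2]
  set t := Real.sqrt S with ht_def
  have ht0 : 0 ≤ t := Real.sqrt_nonneg S
  have ht2 : t ^ 2 = S := Real.sq_sqrt hS0
  have ht2' : t ^ 2 = l1 ^ 2 + l2 ^ 2 + l3 ^ 2 + l4 ^ 2 - R ^ 2 / 4 := by rw [ht2, hS]
  have hc : R / (2 * s) = s * R / 6 := by
    rw [div_eq_iff (by positivity)]
    linear_combination (- R / 3) * hs3
  have hγs : γ * s ≤ 1 + s := (le_div_iff₀ hs0).mp hγ1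
  have hγ6 : γ / (2 * s) ≤ (1 + s) / 6 := by
    rw [div_le_div_iff₀ (by positivity) (by norm_num)]
    have h1 := mul_le_mul_of_nonneg_left hγs (by linarith : (0:ℝ) ≤ 2 * s)
    have h2 : 2 * s * (γ * s) = 6 * γ := by linear_combination (2 * γ) * hs3
    linarith [h1, h2]
  have habs : |w| ≤ (1 + s) / 6 * |t - s * R / 6| := by
    calc |w| ≤ γ / (2 * s) * |t - R / (2 * s)| := hw
      _ = γ / (2 * s) * |t - s * R / 6| := by rw [hc]
      _ ≤ (1 + s) / 6 * |t - s * R / 6| := by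
          exact mul_le_mul_of_nonneg_right hγ6 (abs_nonneg _)
  have hwle : w ≤ (1 + s) / 6 * |t - s * R / 6| := le_trans (le_abs_self w) habs
  have hη0' : (0:ℝ) < η := by linarith
  have h31 : (0:ℝ) < 3 * η - 1 := by linarith
  have h1η : (0:ℝ) ≤ 1 - η := by linarith
  have hsηp : (0:ℝ) < s * η := mul_pos hs0 hη0'
  have hP2 : (l1 + l2) ^ 2 ≤ 2 * (l1 ^ 2 + l2 ^ 2) := by linarith [sq_nonneg (l1 - l2)]
  have hQ2 : (l3 + l4) ^ 2 ≤ 2 * (l3 ^ 2 + l4 ^ 2) := by linarith [sq_nonneg (l3 - l4)]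
  have hPb : l1 ^ 2 + l2 ^ 2 ≤ (l1 + l2) ^ 2 := by linarith only [mul_nonneg hl1 hl2, sq_nonneg (l1 + l2), sq_abs l1, mul_self_nonneg l1]
  have hl12 : l1 + l2 = (1 - η) * R / 2 := by linarith
  have hl34 : l3 + l4 = (1 + η) * R / 2 := by linarith
  have hQb : ((1 + η) * R / 2) ^ 2 ≤ 2 * (l3 ^ 2 + l4 ^ 2) := by rw [← hl34]; exact hQ2
  have hPb' : l1 ^ 2 + l2 ^ 2 ≤ ((1 - η) * R / 2) ^ 2 := by rw [← hl12]; exact hPb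
  have hPb2 : ((1 - η) * R / 2) ^ 2 ≤ 2 * (l1 ^ 2 + l2 ^ 2) := by rw [← hl12]; exact hP2
  rcases le_or_gt (s * R / 6) t with hcase | hcase
  · -- Case A : t ≥ R/(2√3)
    have habsA : |t - s * R / 6| = t - s * R / 6 := abs_of_nonneg (by linarith)
    have hwleA : w ≤ (1 + s) / 6 * (t - s * R / 6) := by rw [habsA] at hwle; exact hwle
    have hidA : s * (t ^ 2 - R ^ 2 / 12) - R * (t - s * R / 6) = s * (t - s * R / 6) ^ 2 := by
      linear_combination (R * t / 3 - s * R ^ 2 / 36) * hs3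
    have hRb : R * (t - s * R / 6) ≤ s * (t ^ 2 - R ^ 2 / 12) := by
      linarith only [hidA, mul_nonneg hs0.le (sq_nonneg (t - s * R / 6))]
    have m1A : 2 * η * R * w ≤ 2 * η * R * ((1 + s) / 6 * (t - s * R / 6)) :=
      mul_le_mul_of_nonneg_left hwleA (by positivity)
    have m2A : η * (1 + s) / 3 * (R * (t - s * R / 6)) ≤
        η * (1 + s) / 3 * (s * (t ^ 2 - R ^ 2 / 12)) :=
      mul_le_mul_of_nonneg_left hRb (by positivity)
    have heqA : η * (1 + s) / 3 * (s * (t ^ 2 - R ^ 2 / 12)) =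
        η * (s + 3) / 3 * ((l1 ^ 2 + l2 ^ 2 + l3 ^ 2 + l4 ^ 2) - R ^ 2 / 3) := by
      rw [ht2, hS]
      linear_combination (η * ((l1 ^ 2 + l2 ^ 2 + l3 ^ 2 + l4 ^ 2) - R ^ 2 / 3) / 3) * hs3
    have eA : 2 * η * R * w ≤
        η * (s + 3) / 3 * ((l1 ^ 2 + l2 ^ 2 + l3 ^ 2 + l4 ^ 2) - R ^ 2 / 3) := by
      linarith only [m1A, m2A, heqA]
    have c1A : 0 ≤ (3 - s * η) * (2 * (l3 ^ 2 + l4 ^ 2) - ((1 + η) * R / 2) ^ 2) :=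
      mul_nonneg (by linarith [mul_nonneg hs0.le h1η]) (by linarith)
    have c2A : 0 ≤ (3 + s * η) * (((1 - η) * R / 2) ^ 2 - (l1 ^ 2 + l2 ^ 2)) :=
      mul_nonneg (by linarith) (by linarith)
    have q1 : 0 ≤ s * ((1 - η) * (3 * η - 1) ^ 2) * R ^ 2 :=
      mul_nonneg (mul_nonneg hs0.le (mul_nonneg h1η (sq_nonneg _))) (sq_nonneg R)
    have q2 : 0 ≤ (3 * s + 3) * ((1 - η) * (3 * η - 1)) * R ^ 2 :=
      mul_nonneg (mul_nonneg (by linarith) (mul_nonneg h1η h31.le)) (sq_nonneg R)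
    have q3 : 0 < (6 - 2 * s) * ((3 * η - 1) * R ^ 2) :=
      mul_pos (by linarith) (mul_pos h31 (by positivity))
    linarith only [eA, c1A, c2A, q1, q2, q3]
  · -- Case B : t < R/(2√3)
    have habsB : |t - s * R / 6| = s * R / 6 - t := by
      rw [abs_of_nonpos (by linarith)]; ring
    have hwleB : w ≤ (1 + s) / 6 * (s * R / 6 - t) := by rw [habsB] at hwle; exact hwle
    have hSig : η ^ 2 * R ^ 2 / 4 ≤ t ^ 2 := by linarith only [hPb2, hQb, ht2']
    have htB : η * R / 2 ≤ t := by nlinarith only [hSig, ht0, mul_pos hη0' hR]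
    have hidB : 2 * s * (R ^ 2 / 12 - t ^ 2) - (1 + s * η) * (R * (s * R / 6 - t)) =
        2 * s * ((s * R / 6 - t) * (t - η * R / 2)) := by
      linear_combination (- R * t / 3) * hs3
    have hbB : (1 + s * η) * (R * (s * R / 6 - t)) ≤ 2 * s * (R ^ 2 / 12 - t ^ 2) := by
      linarith only [hidB, mul_nonneg hs0.le (mul_nonneg (by linarith : (0:ℝ) ≤ s * R / 6 - t)
        (by linarith : (0:ℝ) ≤ t - η * R / 2))]
    have hsη : (0:ℝ) < 1 + s * η := by linarith
    have m1B : 2 * η * R * (1 + s * η) * w ≤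
        2 * η * R * (1 + s * η) * ((1 + s) / 6 * (s * R / 6 - t)) :=
      mul_le_mul_of_nonneg_left hwleB (by positivity)
    have m2B : η * (1 + s) / 3 * ((1 + s * η) * (R * (s * R / 6 - t))) ≤
        η * (1 + s) / 3 * (2 * s * (R ^ 2 / 12 - t ^ 2)) :=
      mul_le_mul_of_nonneg_left hbB (by positivity)
    have heqB : η * (1 + s) / 3 * (2 * s * (R ^ 2 / 12 - t ^ 2)) =
        2 * η * (s + 3) / 3 * (R ^ 2 / 3 - (l1 ^ 2 + l2 ^ 2 + l3 ^ 2 + l4 ^ 2)) := by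
      rw [ht2, hS]
      linear_combination (2 * η * (R ^ 2 / 3 - (l1 ^ 2 + l2 ^ 2 + l3 ^ 2 + l4 ^ 2)) / 3) * hs3
    have eB : 2 * η * R * (1 + s * η) * w ≤
        2 * η * (s + 3) / 3 * (R ^ 2 / 3 - (l1 ^ 2 + l2 ^ 2 + l3 ^ 2 + l4 ^ 2)) := by
      linarith only [m1B, m2B, heqB]
    have c1B : 0 ≤ ((1 + s * η) * (1 + η) + 2 * η * (s + 3) / 3) *
        (2 * (l3 ^ 2 + l4 ^ 2) - ((1 + η) * R / 2) ^ 2) :=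
      mul_nonneg (by linarith only [hsηp, hη0', hs0, mul_nonneg hsηp.le hη0'.le]) (by linarith)
    have c2B : 0 ≤ ((3 * η - 1) * (s * η + 3) / 3) *
        (2 * (l1 ^ 2 + l2 ^ 2) - ((1 - η) * R / 2) ^ 2) :=
      mul_nonneg (div_nonneg (mul_nonneg h31.le (by linarith)) (by norm_num)) (by linarith)
    have b0 : 0 < η * (3 * η - 1) * R ^ 2 :=
      mul_pos (mul_pos hη0' h31) (by positivity)
    have b1 : 0 ≤ s * (η ^ 3 * (3 * η - 1)) * R ^ 2 :=
      mul_nonneg (mul_nonneg hs0.le (mul_nonneg (by positivity) h31.le)) (sq_nonneg R)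
    have b2 : 0 ≤ (9 + 3 * s) * (η ^ 2 * (3 * η - 1)) * R ^ 2 :=
      mul_nonneg (mul_nonneg (by linarith) (mul_nonneg (sq_nonneg η) h31.le)) (sq_nonneg R)
    have b3 : 0 ≤ s * (η * (3 * η - 1)) * R ^ 2 :=
      mul_nonneg (mul_nonneg hs0.le (mul_nonneg hη0'.le h31.le)) (sq_nonneg R)
    have keyB : 0 < (1 + s * η) * ((1 + η) * (l3 ^ 2 + l4 ^ 2) - (1 - η) * (l1 ^ 2 + l2 ^ 2) -
        2 * η * R * (R / 3 + w)) := by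
      linarith only [eB, c1B, c2B, b0, b1, b2, b3]
    have hfin := mul_pos (inv_pos.mpr hsη) keyB
    rwa [inv_mul_cancel_left₀ (ne_of_gt hsη)] at hfin
end
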